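/- arXiv:2605.22291 — 4 statements merged into one kernel-verified Lean document; each statement's English description precedes it below -/
import Mathlib

section
/- There exist {0,1}-valued random variables A, Y, Z (a joint distribution on {0,1}^3) such that the accepted-population qualification disparity P(Y=1 | A=1, Z=1) - P(Y=1 | A=1, Z=0) equals 0, while the true qualification disparity P(Y=1 | Z=1) - P(Y=1 | Z=0) is nonzero. -/
/-!
Take three equally likely individuals. Two are accepted, both qualified, one in each group;
the rejected one is unqualified and belongs to group `1`. Among the accepted, both groups are
qualified with probability `1`, while in the whole population group `1` is qualified with
probability `1/2` and group `0` with probability `1`.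
-/

open MeasureTheory

/-- Conditional probability `P(E | C) = μ(E ∩ C) / μ(C)` as a real number. -/
noncomputable def condProb {Ω : Type*} [MeasurableSpace Ω]
    (μ : Measure Ω) (E C : Set Ω) : ℝ :=
  (μ (E ∩ C)).toReal / (μ C).toReal

open Finset PMF

section Uniform

variable {α : Type*} [Fintype α] [Nonempty α] [MeasurableSpace α] [MeasurableSingletonClass α]

theorem toReal_toMeasure_uniformOfFintype (s : Set α) [DecidablePred (· ∈ s)] :
    ((uniformOfFintype α).toMeasure s).toReal = #{x | x ∈ s} / Fintype.card α := by
  rw [toMeasure_uniformOfFintype_apply s s.toFinite.measurableSet, Fintype.card_subtype]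
  simp [ENNReal.toReal_div]

theorem condProb_uniformOfFintype (E C : Set α) [DecidablePred (· ∈ E)] [DecidablePred (· ∈ C)] :
    condProb (uniformOfFintype α).toMeasure E C = #{x | x ∈ E ∧ x ∈ C} / #{x | x ∈ C} := by
  have hα : (Fintype.card α : ℝ) ≠ 0 := by positivity
  rw [condProb, toReal_toMeasure_uniformOfFintype, toReal_toMeasure_uniformOfFintype]
  simp only [Set.mem_inter_iff]
  exact div_div_div_cancel_right₀ hα _ _

theorem toMeasure_uniformOfFintype_ne_zero {s : Set α} (hs : s.Nonempty) :
    (uniformOfFintype α).toMeasure s ≠ 0 := by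
  rw [Ne, toMeasure_apply_eq_zero_iff _ s.toFinite.measurableSet, support_uniformOfFintype]
  simpa [← Set.nonempty_iff_ne_empty] using hs

end Uniform

namespace SelectiveLabels

def accepted : Fin 3 → ℕ := ![1, 1, 0]

def qualified : Fin 3 → ℕ := ![1, 1, 0]

def group : Fin 3 → ℕ := ![1, 0, 1]

end SelectiveLabels

open SelectiveLabels in
/-- There exist `{0,1}`-valued random variables `A, Y, Z` such that the
accepted-population qualification disparity vanishes while the true
qualification disparity is nonzero. -/
theorem stmt_4 :
    ∃ (Ω : Type) (m : MeasurableSpace Ω) (μ : Measure Ω)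
      (_ : IsProbabilityMeasure μ) (A Y Z : Ω → ℕ),
      Measurable A ∧ Measurable Y ∧ Measurable Z ∧
      (∀ ω, A ω = 0 ∨ A ω = 1) ∧
      (∀ ω, Y ω = 0 ∨ Y ω = 1) ∧
      (∀ ω, Z ω = 0 ∨ Z ω = 1) ∧
      (∀ i, i = 0 ∨ i = 1 → μ ({ω | A ω = 1} ∩ {ω | Z ω = i}) ≠ 0) ∧
      condProb μ {ω | Y ω = 1} ({ω | A ω = 1} ∩ {ω | Z ω = 1})
        - condProb μ {ω | Y ω = 1} ({ω | A ω = 1} ∩ {ω | Z ω = 0}) = 0 ∧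
      condProb μ {ω | Y ω = 1} {ω | Z ω = 1}
        - condProb μ {ω | Y ω = 1} {ω | Z ω = 0} ≠ 0 := by
  refine ⟨Fin 3, inferInstance, (uniformOfFintype (Fin 3)).toMeasure, inferInstance,
    accepted, qualified, group, measurable_of_finite _, measurable_of_finite _,
    measurable_of_finite _, by decide, by decide, by decide, ?_, ?_, ?_⟩
  · rintro i (rfl | rfl)
    · exact toMeasure_uniformOfFintype_ne_zero ⟨1, by decide⟩
    · exact toMeasure_uniformOfFintype_ne_zero ⟨0, by decide⟩
  all_goals
    simp only [condProb_uniformOfFintype, card_filter, Fin.sum_univ_three]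
    norm_num [accepted, qualified, group, Matrix.cons_val_two]
end

section
/- (Observed disparity decomposition for accuracy parity.) With Ỹ = A·Y + (1−A)·Ŷ, the observed accuracy disparity Δ̃ = P(Ỹ = A | Z=1) − P(Ỹ = A | Z=0) equals the true accuracy disparity Δ = P(Y = A | Z=1) − P(Y = A | Z=0) minus the bias term (r^1 ε^1 − r^0 ε^0), where r^i = P(A=0 | Z=i) and ε^i = E[Ŷ − Y | A=0, Z=i]. -/
/-!
Where `A = 1` the imputed label `Ỹ` is `Y`, and where `A = 0` it is `Ŷ`; for binary labels
`1{Y = 0} - 1{Ŷ = 0} = Ŷ - Y`. Hence pointwise `1{Y = A} - 1{Ỹ = A} = 1{A = 0} (Ŷ - Y)`, and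
integrating over `{Z = i}` and dividing by `P(Z = i)` gives the identity in each stratum, because
`r^i ε^i = E[1{A = 0} (Ŷ - Y) | Z = i]`.
-/

open MeasureTheory

/-- Conditional expectation `E[f | C] = (∫_C f dμ) / μ(C)`. -/
noncomputable def condExp' {Ω : Type*} [MeasurableSpace Ω]
    (μ : Measure Ω) (f : Ω → ℝ) (C : Set Ω) : ℝ :=
  (∫ ω in C, f ω ∂μ) / (μ C).toReal

section CondProb

variable {Ω : Type*} [MeasurableSpace Ω] {μ : Measure Ω} {E B C : Set Ω}

lemma condProb_eq_setIntegral_indicator_one (hE : MeasurableSet E) :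
    condProb μ E C = (∫ ω in C, E.indicator 1 ω ∂μ) / (μ C).toReal := by
  rw [integral_indicator_one hE, measureReal_restrict_apply hE]
  rfl

lemma condProb_mul_condExp' (hB : MeasurableSet B) (f : Ω → ℝ) :
    condProb μ B C * condExp' μ f (B ∩ C) = (∫ ω in C, B.indicator f ω ∂μ) / (μ C).toReal := by
  rw [setIntegral_indicator hB, Set.inter_comm C B]
  unfold condProb condExp'
  -- With `x / 0 = 0` no positivity is needed: if `μ (B ∩ C) = 0` the integral vanishes,
  -- and if `μ (B ∩ C) = ∞` then `μ C = ∞`, so both sides are `0`.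
  rcases eq_or_ne (μ (B ∩ C)).toReal 0 with h | h
  · rcases (ENNReal.toReal_eq_zero_iff _).mp h with hnull | htop
    · simp [Measure.restrict_eq_zero.mpr hnull]
    · simp [measure_mono_top Set.inter_subset_right htop]
  · field_simp

end CondProb

section Imputation

variable {Ω : Type*} {A Y Yh : Ω → ℕ}

lemma indicator_sub_indicator_imputed (hA01 : ∀ ω, A ω = 0 ∨ A ω = 1)
    (hY01 : ∀ ω, Y ω = 0 ∨ Y ω = 1) (hYh01 : ∀ ω, Yh ω = 0 ∨ Yh ω = 1) :
    {ω | Y ω = A ω}.indicator (1 : Ω → ℝ)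
        - {ω | A ω * Y ω + (1 - A ω) * Yh ω = A ω}.indicator 1
      = {ω | A ω = 0}.indicator (fun ω => (Yh ω : ℝ) - Y ω) := by
  funext ω
  rcases hA01 ω with hA | hA <;> rcases hY01 ω with hY | hY <;> rcases hYh01 ω with hYh | hYh <;>
    simp [Set.indicator, hA, hY, hYh]

variable [MeasurableSpace Ω]

lemma condProb_imputed_eq (μ : Measure Ω) [IsFiniteMeasure μ] (C : Set Ω)
    (hA : Measurable A) (hY : Measurable Y) (hYh : Measurable Yh)
    (hA01 : ∀ ω, A ω = 0 ∨ A ω = 1) (hY01 : ∀ ω, Y ω = 0 ∨ Y ω = 1)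
    (hYh01 : ∀ ω, Yh ω = 0 ∨ Yh ω = 1) :
    condProb μ {ω | A ω * Y ω + (1 - A ω) * Yh ω = A ω} C
      = condProb μ {ω | Y ω = A ω} C
        - condProb μ {ω | A ω = 0} C
          * condExp' μ (fun ω => (Yh ω : ℝ) - (Y ω : ℝ)) ({ω | A ω = 0} ∩ C) := by
  have hobs : MeasurableSet {ω | A ω * Y ω + (1 - A ω) * Yh ω = A ω} :=
    measurableSet_eq_fun (by fun_prop) hA
  have htrue : MeasurableSet {ω | Y ω = A ω} := measurableSet_eq_fun hY hA
  have hA0 : MeasurableSet {ω | A ω = 0} := measurableSet_eq_fun hA measurable_const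
  rw [condProb_mul_condExp' hA0,
    ← indicator_sub_indicator_imputed hA01 hY01 hYh01,
    integral_sub' ((integrable_const 1).indicator htrue) ((integrable_const 1).indicator hobs),
    condProb_eq_setIntegral_indicator_one hobs, condProb_eq_setIntegral_indicator_one htrue,
    sub_div, sub_sub_cancel]

end Imputation

theorem stmt_7_general {Ω : Type*} [MeasurableSpace Ω]
    (μ : Measure Ω) [IsProbabilityMeasure μ]
    (A Y Yh Z : Ω → ℕ)
    (hA : Measurable A) (hY : Measurable Y) (hYh : Measurable Yh)
    (hA01 : ∀ ω, A ω = 0 ∨ A ω = 1)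
    (hY01 : ∀ ω, Y ω = 0 ∨ Y ω = 1)
    (hYh01 : ∀ ω, Yh ω = 0 ∨ Yh ω = 1) :
    condProb μ {ω | A ω * Y ω + (1 - A ω) * Yh ω = A ω} {ω | Z ω = 1}
      - condProb μ {ω | A ω * Y ω + (1 - A ω) * Yh ω = A ω} {ω | Z ω = 0}
    = (condProb μ {ω | Y ω = A ω} {ω | Z ω = 1}
        - condProb μ {ω | Y ω = A ω} {ω | Z ω = 0})
      - (condProb μ {ω | A ω = 0} {ω | Z ω = 1}
          * condExp' μ (fun ω => (Yh ω : ℝ) - (Y ω : ℝ))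
              ({ω | A ω = 0} ∩ {ω | Z ω = 1})
        - condProb μ {ω | A ω = 0} {ω | Z ω = 0}
          * condExp' μ (fun ω => (Yh ω : ℝ) - (Y ω : ℝ))
              ({ω | A ω = 0} ∩ {ω | Z ω = 0})) := by
  rw [condProb_imputed_eq μ _ hA hY hYh hA01 hY01 hYh01,
    condProb_imputed_eq μ _ hA hY hYh hA01 hY01 hYh01]
  ring

/-- Observed disparity decomposition for accuracy parity: with imputed label
`Ỹ = A·Y + (1-A)·Ŷ`,
`P(Ỹ=A|Z=1) - P(Ỹ=A|Z=0) = (P(Y=A|Z=1) - P(Y=A|Z=0)) - (r¹ε¹ - r⁰ε⁰)`. -/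
theorem stmt_7 {Ω : Type*} [MeasurableSpace Ω]
    (μ : Measure Ω) [IsProbabilityMeasure μ]
    (A Y Yh Z : Ω → ℕ)
    (hA : Measurable A) (hY : Measurable Y) (hYh : Measurable Yh)
    (hZ : Measurable Z)
    (hA01 : ∀ ω, A ω = 0 ∨ A ω = 1)
    (hY01 : ∀ ω, Y ω = 0 ∨ Y ω = 1)
    (hYh01 : ∀ ω, Yh ω = 0 ∨ Yh ω = 1)
    (hZpos : ∀ i, i = 0 ∨ i = 1 → μ {ω | Z ω = i} ≠ 0)
    (hAZpos : ∀ i, i = 0 ∨ i = 1 → μ ({ω | A ω = 0} ∩ {ω | Z ω = i}) ≠ 0) :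
    condProb μ {ω | A ω * Y ω + (1 - A ω) * Yh ω = A ω} {ω | Z ω = 1}
      - condProb μ {ω | A ω * Y ω + (1 - A ω) * Yh ω = A ω} {ω | Z ω = 0}
    = (condProb μ {ω | Y ω = A ω} {ω | Z ω = 1}
        - condProb μ {ω | Y ω = A ω} {ω | Z ω = 0})
      - (condProb μ {ω | A ω = 0} {ω | Z ω = 1}
          * condExp' μ (fun ω => (Yh ω : ℝ) - (Y ω : ℝ))
              ({ω | A ω = 0} ∩ {ω | Z ω = 1})
        - condProb μ {ω | A ω = 0} {ω | Z ω = 0}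
          * condExp' μ (fun ω => (Yh ω : ℝ) - (Y ω : ℝ))
              ({ω | A ω = 0} ∩ {ω | Z ω = 0})) :=
  stmt_7_general μ A Y Yh Z hA hY hYh hA01 hY01 hYh01
end

section
/- (Observed disparity decomposition for equality of opportunity.) With Ỹ = A·Y + (1−A)·Ŷ, define μ^i = P(A=1 | Y=1, Z=i), φ̃^i = P(Ỹ=1 | Z=i), r^i = P(A=0 | Z=i), ε^i = E[Ŷ − Y | A=0, Z=i], and κ^i = 1 − r^i ε^i / φ̃^i. Then the observed disparity Δ̃ = P(A=1 | Ỹ=1, Z=1) − P(A=1 | Ỹ=1, Z=0) equals μ^1 κ^1 − μ^0 κ^0. -/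
open MeasureTheory

/-! Condition on an event `C` (here `Z = i`) and split it by `A`. Since `Ỹ = Y` on `{A = 1}` and
`Ỹ = Ŷ` on `{A = 0}`, with `a = P(A=1, Y=1, C)`, `b = P(A=0, Ŷ=1, C)`, `c = P(A=0, Y=1, C)` we get
`P(Ỹ=1, C) = a + b`, `P(Y=1, C) = a + c` and `r ε P(C) = b - c`. Hence `κ = (a + c) / (a + b)`,
and `μ κ = a / (a + b) = P(A=1 | Ỹ=1, C)` in each slice. -/

lemma div_add_eq_div_add_mul_one_sub {a b c r z : ℝ} (hab : a + b ≠ 0) (hac : a + c ≠ 0)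
    (hr : r ≠ 0) (hz : z ≠ 0) :
    a / (a + b) = a / (a + c) * (1 - r / z * ((b - c) / r) / ((a + b) / z)) := by
  field_simp
  ring

lemma natCast_eq_indicator_one {Ω : Type*} {f : Ω → ℕ} (hf : ∀ ω, f ω = 0 ∨ f ω = 1) :
    (fun ω => (f ω : ℝ)) = {ω | f ω = 1}.indicator 1 := by
  funext ω
  rcases hf ω with h | h <;> simp [h]

section

variable {Ω : Type*} [MeasurableSpace Ω] {μ : Measure Ω}

lemma setIntegral_natCast_of_zero_or_one {f : Ω → ℕ} (hf : Measurable f)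
    (hf01 : ∀ ω, f ω = 0 ∨ f ω = 1) (C : Set Ω) :
    ∫ ω in C, (f ω : ℝ) ∂μ = μ.real ({ω | f ω = 1} ∩ C) := by
  have hm : MeasurableSet {ω | f ω = 1} := hf (measurableSet_singleton 1)
  rw [natCast_eq_indicator_one hf01, setIntegral_indicator hm]
  simp [Set.inter_comm]

variable [IsFiniteMeasure μ]

lemma integrable_natCast_of_zero_or_one {f : Ω → ℕ} (hf : Measurable f)
    (hf01 : ∀ ω, f ω = 0 ∨ f ω = 1) (C : Set Ω) :
    Integrable (fun ω => (f ω : ℝ)) (μ.restrict C) := by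
  rw [natCast_eq_indicator_one hf01]
  exact (integrable_const 1).indicator (hf (measurableSet_singleton 1))

lemma condExp'_natCast_sub_natCast {f g : Ω → ℕ} (hf : Measurable f) (hg : Measurable g)
    (hf01 : ∀ ω, f ω = 0 ∨ f ω = 1) (hg01 : ∀ ω, g ω = 0 ∨ g ω = 1) (C : Set Ω) :
    condExp' μ (fun ω => (g ω : ℝ) - (f ω : ℝ)) C
      = (μ.real ({ω | g ω = 1} ∩ C) - μ.real ({ω | f ω = 1} ∩ C)) / μ.real C := by
  rw [condExp', integral_sub (integrable_natCast_of_zero_or_one hg hg01 C)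
    (integrable_natCast_of_zero_or_one hf hf01 C), setIntegral_natCast_of_zero_or_one hg hg01,
    setIntegral_natCast_of_zero_or_one hf hf01]
  rfl

lemma condProb_eq_condProb_mul_one_sub {S E F G C : Set Ω} (hS : MeasurableSet S)
    (hEF : ∀ ω ∈ S, ω ∈ E ↔ ω ∈ F) (hEG : ∀ ω ∉ S, ω ∈ E ↔ ω ∈ G)
    (hE : μ (E ∩ C) ≠ 0) (hF : μ (F ∩ C) ≠ 0) (hSc : μ (Sᶜ ∩ C) ≠ 0) :
    condProb μ S (E ∩ C) = condProb μ S (F ∩ C)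
      * (1 - condProb μ Sᶜ C
          * ((μ.real (G ∩ (Sᶜ ∩ C)) - μ.real (F ∩ (Sᶜ ∩ C))) / μ.real (Sᶜ ∩ C))
          / condProb μ E C) := by
  have hE_split : μ.real (E ∩ C) = μ.real (S ∩ (F ∩ C)) + μ.real (G ∩ (Sᶜ ∩ C)) := by
    rw [← measureReal_inter_add_sdiff (s := E ∩ C) hS]
    congr 2 <;> ext ω <;> by_cases h : ω ∈ S <;> simp_all
  have hF_split : μ.real (F ∩ C) = μ.real (S ∩ (F ∩ C)) + μ.real (F ∩ (Sᶜ ∩ C)) := by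
    rw [← measureReal_inter_add_sdiff (s := F ∩ C) hS]
    congr 2 <;> ext ω <;> by_cases h : ω ∈ S <;> simp_all
  have hS_E : S ∩ (E ∩ C) = S ∩ (F ∩ C) := by
    ext ω; by_cases h : ω ∈ S <;> simp_all
  have hC : μ C ≠ 0 := fun h => hE (measure_mono_null Set.inter_subset_right h)
  have hpos : ∀ {s : Set Ω}, μ s ≠ 0 → μ.real s ≠ 0 := fun h =>
    ENNReal.toReal_ne_zero.2 ⟨h, measure_ne_top _ _⟩
  simp only [condProb, ← measureReal_def]
  rw [hS_E, hE_split, hF_split]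
  exact div_add_eq_div_add_mul_one_sub (hE_split ▸ hpos hE) (hF_split ▸ hpos hF) (hpos hSc)
    (hpos hC)

lemma condProb_observed_eq_mul_one_sub {A Y Yh : Ω → ℕ}
    (hA : Measurable A) (hY : Measurable Y) (hYh : Measurable Yh)
    (hA01 : ∀ ω, A ω = 0 ∨ A ω = 1) (hY01 : ∀ ω, Y ω = 0 ∨ Y ω = 1)
    (hYh01 : ∀ ω, Yh ω = 0 ∨ Yh ω = 1) {C : Set Ω}
    (hYtC : μ ({ω | A ω * Y ω + (1 - A ω) * Yh ω = 1} ∩ C) ≠ 0)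
    (hYC : μ ({ω | Y ω = 1} ∩ C) ≠ 0) (hAC : μ ({ω | A ω = 0} ∩ C) ≠ 0) :
    condProb μ {ω | A ω = 1} ({ω | A ω * Y ω + (1 - A ω) * Yh ω = 1} ∩ C)
      = condProb μ {ω | A ω = 1} ({ω | Y ω = 1} ∩ C)
        * (1 - condProb μ {ω | A ω = 0} C
              * condExp' μ (fun ω => (Yh ω : ℝ) - (Y ω : ℝ)) ({ω | A ω = 0} ∩ C)
              / condProb μ {ω | A ω * Y ω + (1 - A ω) * Yh ω = 1} C) := by
  have hA0 : {ω | A ω = 0} = {ω | A ω = 1}ᶜ := by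
    ext ω; rcases hA01 ω with h | h <;> simp [h]
  rw [condExp'_natCast_sub_natCast hY hYh hY01 hYh01, hA0]
  refine condProb_eq_condProb_mul_one_sub (hA (measurableSet_singleton 1)) ?_ ?_ hYtC hYC
    (hA0 ▸ hAC)
  · intro ω h
    simp_all
  · intro ω h
    rcases hA01 ω with h' | h' <;> simp_all

end

theorem stmt_9_general {Ω : Type*} [MeasurableSpace Ω]
    (μ : Measure Ω) [IsProbabilityMeasure μ]
    (A Y Yh Z : Ω → ℕ)
    (hA : Measurable A) (hY : Measurable Y) (hYh : Measurable Yh)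
    (hA01 : ∀ ω, A ω = 0 ∨ A ω = 1)
    (hY01 : ∀ ω, Y ω = 0 ∨ Y ω = 1)
    (hYh01 : ∀ ω, Yh ω = 0 ∨ Yh ω = 1)
    (hYtZ : ∀ i, i = 0 ∨ i = 1 →
      μ ({ω | A ω * Y ω + (1 - A ω) * Yh ω = 1} ∩ {ω | Z ω = i}) ≠ 0)
    (hYZ : ∀ i, i = 0 ∨ i = 1 → μ ({ω | Y ω = 1} ∩ {ω | Z ω = i}) ≠ 0)
    (hAZ : ∀ i, i = 0 ∨ i = 1 → μ ({ω | A ω = 0} ∩ {ω | Z ω = i}) ≠ 0) :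
    condProb μ {ω | A ω = 1}
        ({ω | A ω * Y ω + (1 - A ω) * Yh ω = 1} ∩ {ω | Z ω = 1})
      - condProb μ {ω | A ω = 1}
        ({ω | A ω * Y ω + (1 - A ω) * Yh ω = 1} ∩ {ω | Z ω = 0})
    = condProb μ {ω | A ω = 1} ({ω | Y ω = 1} ∩ {ω | Z ω = 1})
        * (1 - condProb μ {ω | A ω = 0} {ω | Z ω = 1}
              * condExp' μ (fun ω => (Yh ω : ℝ) - (Y ω : ℝ))
                  ({ω | A ω = 0} ∩ {ω | Z ω = 1})
              / condProb μ {ω | A ω * Y ω + (1 - A ω) * Yh ω = 1} {ω | Z ω = 1})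
      - condProb μ {ω | A ω = 1} ({ω | Y ω = 1} ∩ {ω | Z ω = 0})
        * (1 - condProb μ {ω | A ω = 0} {ω | Z ω = 0}
              * condExp' μ (fun ω => (Yh ω : ℝ) - (Y ω : ℝ))
                  ({ω | A ω = 0} ∩ {ω | Z ω = 0})
              / condProb μ {ω | A ω * Y ω + (1 - A ω) * Yh ω = 1} {ω | Z ω = 0}) := by
  rw [condProb_observed_eq_mul_one_sub hA hY hYh hA01 hY01 hYh01
      (hYtZ 1 (Or.inr rfl)) (hYZ 1 (Or.inr rfl)) (hAZ 1 (Or.inr rfl)),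
    condProb_observed_eq_mul_one_sub hA hY hYh hA01 hY01 hYh01
      (hYtZ 0 (Or.inl rfl)) (hYZ 0 (Or.inl rfl)) (hAZ 0 (Or.inl rfl))]

/-- Observed disparity decomposition for equality of opportunity: with
`Ỹ = A·Y + (1-A)·Ŷ`, `μⁱ = P(A=1|Y=1,Z=i)`, `φ̃ⁱ = P(Ỹ=1|Z=i)`,
`rⁱ = P(A=0|Z=i)`, `εⁱ = E[Ŷ-Y|A=0,Z=i]`, `κⁱ = 1 - rⁱεⁱ/φ̃ⁱ`:
`P(A=1|Ỹ=1,Z=1) - P(A=1|Ỹ=1,Z=0) = μ¹κ¹ - μ⁰κ⁰`. -/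
theorem stmt_9 {Ω : Type*} [MeasurableSpace Ω]
    (μ : Measure Ω) [IsProbabilityMeasure μ]
    (A Y Yh Z : Ω → ℕ)
    (hA : Measurable A) (hY : Measurable Y) (hYh : Measurable Yh)
    (hZ : Measurable Z)
    (hA01 : ∀ ω, A ω = 0 ∨ A ω = 1)
    (hY01 : ∀ ω, Y ω = 0 ∨ Y ω = 1)
    (hYh01 : ∀ ω, Yh ω = 0 ∨ Yh ω = 1)
    (hYtZ : ∀ i, i = 0 ∨ i = 1 →
      μ ({ω | A ω * Y ω + (1 - A ω) * Yh ω = 1} ∩ {ω | Z ω = i}) ≠ 0)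
    (hYZ : ∀ i, i = 0 ∨ i = 1 → μ ({ω | Y ω = 1} ∩ {ω | Z ω = i}) ≠ 0)
    (hAZ : ∀ i, i = 0 ∨ i = 1 → μ ({ω | A ω = 0} ∩ {ω | Z ω = i}) ≠ 0) :
    condProb μ {ω | A ω = 1}
        ({ω | A ω * Y ω + (1 - A ω) * Yh ω = 1} ∩ {ω | Z ω = 1})
      - condProb μ {ω | A ω = 1}
        ({ω | A ω * Y ω + (1 - A ω) * Yh ω = 1} ∩ {ω | Z ω = 0})
    = condProb μ {ω | A ω = 1} ({ω | Y ω = 1} ∩ {ω | Z ω = 1})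
        * (1 - condProb μ {ω | A ω = 0} {ω | Z ω = 1}
              * condExp' μ (fun ω => (Yh ω : ℝ) - (Y ω : ℝ))
                  ({ω | A ω = 0} ∩ {ω | Z ω = 1})
              / condProb μ {ω | A ω * Y ω + (1 - A ω) * Yh ω = 1} {ω | Z ω = 1})
      - condProb μ {ω | A ω = 1} ({ω | Y ω = 1} ∩ {ω | Z ω = 0})
        * (1 - condProb μ {ω | A ω = 0} {ω | Z ω = 0}
              * condExp' μ (fun ω => (Yh ω : ℝ) - (Y ω : ℝ))
                  ({ω | A ω = 0} ∩ {ω | Z ω = 0})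
              / condProb μ {ω | A ω * Y ω + (1 - A ω) * Yh ω = 1} {ω | Z ω = 0}) :=
  stmt_9_general μ A Y Yh Z hA hY hYh hA01 hY01 hYh01 hYtZ hYZ hAZ
end

section
/- (Sufficient conditions for equality of opportunity.) Let Δ̃ = μ^1 κ^1 − μ^0 κ^0 where μ^0, μ^1 ∈ [0,1], κ^i = 1 − b^i with b^i = r^i ε^i / φ̃^i, and let Δ = μ^1 − μ^0. Let v = max(b^0, b^1) and assume v < 1 and b^i ≥ 0. If |b^1 − b^0| ≤ (1−v)ω/2 and |Δ̃| ≤ (1−v)ω/2, then |Δ| ≤ ω. -/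
/-! Multiplying out, `κ¹ Δ = Δ̃ + μ⁰ (b¹ - b⁰)`, so `κ¹ |Δ| ≤ |Δ̃| + |b¹ - b⁰| ≤ (1 - v) ω`;
since `κ¹ ≥ 1 - v > 0`, dividing by `1 - v` gives `|Δ| ≤ ω`. -/

theorem abs_mul_sub_le_abs_sub_add_abs_sub {R : Type*} [CommRing R] [LinearOrder R]
    [IsStrictOrderedRing R] {μ0 : R} (hμ0 : |μ0| ≤ 1) (μ1 b0 b1 : R) :
    |(1 - b1) * (μ1 - μ0)| ≤ |μ1 * (1 - b1) - μ0 * (1 - b0)| + |b1 - b0| := by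
  have hsplit : (1 - b1) * (μ1 - μ0) = (μ1 * (1 - b1) - μ0 * (1 - b0)) + μ0 * (b1 - b0) := by
    ring
  have hbias : |μ0 * (b1 - b0)| ≤ |b1 - b0| := by
    rw [abs_mul]
    exact mul_le_of_le_one_left (abs_nonneg _) hμ0
  rw [hsplit]
  exact (abs_add_le _ _).trans (by gcongr)

theorem stmt_11_general (μ0 μ1 b0 b1 ω : ℝ)
    (hμ0 : μ0 ∈ Set.Icc (0 : ℝ) 1)
    (hv : max b0 b1 < 1)
    (hbias : |b1 - b0| ≤ (1 - max b0 b1) * ω / 2)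
    (hobs : |μ1 * (1 - b1) - μ0 * (1 - b0)| ≤ (1 - max b0 b1) * ω / 2) :
    |μ1 - μ0| ≤ ω := by
  have hgap : 0 < 1 - max b0 b1 := sub_pos.mpr hv
  have hκ1 : 1 - max b0 b1 ≤ 1 - b1 := sub_le_sub_left (le_max_right _ _) _
  have hμ0' : |μ0| ≤ 1 := abs_le.mpr ⟨by linarith [hμ0.1], hμ0.2⟩
  have key := abs_mul_sub_le_abs_sub_add_abs_sub hμ0' μ1 b0 b1
  rw [abs_mul, abs_of_pos (hgap.trans_le hκ1)] at key
  refine le_of_mul_le_mul_left ?_ hgap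
  calc (1 - max b0 b1) * |μ1 - μ0| ≤ (1 - b1) * |μ1 - μ0| :=
        mul_le_mul_of_nonneg_right hκ1 (abs_nonneg _)
    _ ≤ |μ1 * (1 - b1) - μ0 * (1 - b0)| + |b1 - b0| := key
    _ ≤ (1 - max b0 b1) * ω := by linarith

/-- Sufficient conditions for equality of opportunity: with `κⁱ = 1 - bⁱ`,
`Δ̃ = μ¹κ¹ - μ⁰κ⁰`, `Δ = μ¹ - μ⁰`, `v = max(b⁰, b¹) < 1`, nonnegative `bⁱ`,
if `|b¹ - b⁰| ≤ (1-v)ω/2` and `|Δ̃| ≤ (1-v)ω/2` then `|Δ| ≤ ω`. -/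
theorem stmt_11 (μ0 μ1 b0 b1 ω : ℝ)
    (hμ0 : μ0 ∈ Set.Icc (0 : ℝ) 1) (hμ1 : μ1 ∈ Set.Icc (0 : ℝ) 1)
    (hb0 : 0 ≤ b0) (hb1 : 0 ≤ b1)
    (hv : max b0 b1 < 1)
    (hω : 0 < ω)
    (hbias : |b1 - b0| ≤ (1 - max b0 b1) * ω / 2)
    (hobs : |μ1 * (1 - b1) - μ0 * (1 - b0)| ≤ (1 - max b0 b1) * ω / 2) :
    |μ1 - μ0| ≤ ω :=
  stmt_11_general μ0 μ1 b0 b1 ω hμ0 hv hbias hobs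
end
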